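/- If the sampling set M satisfies the NCC with constants K > 0 and L > sqrt(p) for partition F, and the observations are noiseless (ε[i] = 0 for all i in M), then any nLasso minimizer x̂ with λ = 1/K satisfies ||x̂ - x||_E = 0, i.e., x̂ - x is constant on every connected component of the subgraph of edges with positive weight. -/
import Mathlib


open Finset

noncomputable def TV {V : Type*} {p : ℕ} (W : V → V → ℝ) (S : Finset (V × V))
    (x : V → EuclideanSpace ℝ (Fin p)) : ℝ :=
  ∑ e ∈ S, W e.1 e.2 * ‖x e.1 - x e.2‖

noncomputable def l1 {p : ℕ} (v : EuclideanSpace ℝ (Fin p)) : ℝ := ∑ k, |v k|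

lemma TV_nonneg' {V : Type*} {p : ℕ} (W : V → V → ℝ) (hW : ∀ i j, 0 ≤ W i j)
    (S : Finset (V × V)) (x : V → EuclideanSpace ℝ (Fin p)) : 0 ≤ TV W S x :=
  Finset.sum_nonneg fun _ _ => mul_nonneg (hW _ _) (norm_nonneg _)

lemma norm_le_l1' {p : ℕ} (v : EuclideanSpace ℝ (Fin p)) : ‖v‖ ≤ l1 v := by
  rw [EuclideanSpace.norm_eq, l1]
  have h1 : ∑ k, ‖v k‖ ^ 2 ≤ (∑ k, |v k|) ^ 2 := by
    simpa [Real.norm_eq_abs] using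
      Finset.sum_sq_le_sq_sum_of_nonneg (s := Finset.univ) (f := fun k => |v k|)
        (fun i _ => abs_nonneg _)
  calc Real.sqrt (∑ k, ‖v k‖ ^ 2) ≤ Real.sqrt ((∑ k, |v k|) ^ 2) := Real.sqrt_le_sqrt h1
    _ = ∑ k, |v k| := Real.sqrt_sq (Finset.sum_nonneg fun k _ => abs_nonneg _)

/-- Noiseless exact recovery: under the NCC with noiseless labels, nLasso recovers the
signal up to a signal with zero TV (constant on connected components of positive-weight edges). -/
theorem stmt13 {V ι : Type*} [Fintype V] [DecidableEq V] [DecidableEq ι] {p : ℕ}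
    (E : Finset (V × V)) (W : V → V → ℝ) (hW : ∀ i j, 0 ≤ W i j)
    (M : Finset V) (σ : V → ι) (K L : ℝ) (hK : 0 < K) (hL : Real.sqrt p < L)
    (hNCC : ∀ z : V → EuclideanSpace ℝ (Fin p),
      (L / Real.sqrt p) * TV W (E.filter (fun e => σ e.1 ≠ σ e.2)) z ≤
        K * ∑ i ∈ M, ‖z i‖ + TV W (E.filter (fun e => σ e.1 = σ e.2)) z)
    (a : ι → EuclideanSpace ℝ (Fin p)) (x : V → EuclideanSpace ℝ (Fin p))
    (hx : ∀ i, x i = a (σ i))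
    (y : V → EuclideanSpace ℝ (Fin p)) (hy : ∀ i ∈ M, y i = x i)
    (xhat : V → EuclideanSpace ℝ (Fin p))
    (hmin : ∀ u : V → EuclideanSpace ℝ (Fin p),
      ∑ i ∈ M, l1 (xhat i - y i) + (1 / K) * TV W E xhat ≤
        ∑ i ∈ M, l1 (u i - y i) + (1 / K) * TV W E u) :
    TV W E (xhat - x) = 0 ∧
    ∀ e ∈ E, 0 < W e.1 e.2 → xhat e.1 - x e.1 = xhat e.2 - x e.2 := by
  set z : V → EuclideanSpace ℝ (Fin p) := xhat - x with hz
  have hzap : ∀ i, z i = xhat i - x i := fun i => rfl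
  set S1 := E.filter (fun e => σ e.1 = σ e.2) with hS1
  set S2 := E.filter (fun e => σ e.1 ≠ σ e.2) with hS2
  -- split of TV
  have hsplit : ∀ u : V → EuclideanSpace ℝ (Fin p), TV W E u = TV W S1 u + TV W S2 u := by
    intro u
    rw [TV, TV, TV, hS1, hS2]
    exact (Finset.sum_filter_add_sum_filter_not E _ _).symm
  -- x is constant on S1 edges
  have hxS1 : ∀ e ∈ S1, x e.1 = x e.2 := by
    intro e he
    rw [hS1, Finset.mem_filter] at he
    rw [hx, hx, he.2]
  have hTVS1x : TV W S1 x = 0 := by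
    apply Finset.sum_eq_zero
    intro e he
    rw [hxS1 e he, sub_self, norm_zero, mul_zero]
  -- objective comparison at u = x
  have hobj := hmin x
  have hlx : ∀ i ∈ M, l1 (x i - y i) = 0 := by
    intro i hi
    rw [hy i hi, sub_self]
    simp [l1]
  rw [Finset.sum_congr rfl hlx, Finset.sum_const, smul_zero, zero_add] at hobj
  have hly : ∀ i ∈ M, l1 (xhat i - y i) = l1 (z i) := by
    intro i hi; rw [hy i hi, hzap]
  rw [Finset.sum_congr rfl hly] at hobj
  -- TV S1 z = TV S1 xhat
  have hTVS1z : TV W S1 z = TV W S1 xhat := by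
    apply Finset.sum_congr rfl
    intro e he
    congr 1
    rw [hzap, hzap, hxS1 e he]
    congr 1
    abel
  -- TV S2 x ≤ TV S2 xhat + TV S2 z
  have hTVS2x : TV W S2 x ≤ TV W S2 xhat + TV W S2 z := by
    rw [TV, TV, TV, ← Finset.sum_add_distrib]
    apply Finset.sum_le_sum
    intro e he
    rw [← mul_add]
    refine mul_le_mul_of_nonneg_left ?_ (hW _ _)
    have hxe : x e.1 - x e.2 = (xhat e.1 - xhat e.2) - (z e.1 - z e.2) := by
      rw [hzap, hzap]; abel
    rw [hxe]
    exact norm_sub_le _ _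
  -- norms ≤ l1
  have hA : ∑ i ∈ M, ‖z i‖ ≤ ∑ i ∈ M, l1 (z i) :=
    Finset.sum_le_sum fun i _ => norm_le_l1' _
  -- core inequality: K * ∑‖z i‖ + TV S1 z ≤ TV S2 z
  have hcore : K * ∑ i ∈ M, ‖z i‖ + TV W S1 z ≤ TV W S2 z := by
    rw [hsplit xhat, hsplit x, hTVS1x, zero_add, mul_add] at hobj
    have hKinv : (0:ℝ) < 1 / K := by positivity
    have h2 := mul_le_mul_of_nonneg_left hTVS2x hKinv.le
    rw [mul_add] at h2
    have hB : ∑ i ∈ M, l1 (z i) + (1/K) * TV W S1 xhat ≤ (1/K) * TV W S2 z := by linarith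
    have h3 := mul_le_mul_of_nonneg_left hB hK.le
    have hK1 : K * (1/K) = 1 := mul_one_div_cancel hK.ne'
    rw [mul_add, ← mul_assoc, hK1, one_mul, ← mul_assoc, hK1, one_mul] at h3
    have h4 := mul_le_mul_of_nonneg_left hA hK.le
    linarith [hTVS1z]
  have hncc := hNCC z
  have hS2z : TV W S2 z = 0 := by
    rcases Nat.eq_zero_or_pos p with hp | hp
    · apply Finset.sum_eq_zero
      intro e he
      subst hp
      have : ‖z e.1 - z e.2‖ = 0 := by
        simp [EuclideanSpace.norm_eq]
      rw [this, mul_zero]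
    · have hsp : (0:ℝ) < Real.sqrt p := Real.sqrt_pos.2 (by exact_mod_cast hp)
      have h1 : (1:ℝ) < L / Real.sqrt p := (one_lt_div hsp).2 hL
      have hT2 : 0 ≤ TV W S2 z := TV_nonneg' W hW S2 z
      have hnn : 0 ≤ K * ∑ i ∈ M, ‖z i‖ :=
        mul_nonneg hK.le (Finset.sum_nonneg fun i _ => norm_nonneg _)
      have hT1 : 0 ≤ TV W S1 z := TV_nonneg' W hW S1 z
      nlinarith
  have hS1zz : TV W S1 z = 0 := by
    have hnn : 0 ≤ K * ∑ i ∈ M, ‖z i‖ :=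
      mul_nonneg hK.le (Finset.sum_nonneg fun i _ => norm_nonneg _)
    have hT1 : 0 ≤ TV W S1 z := TV_nonneg' W hW S1 z
    linarith [hcore, hS2z]
  have hTVz : TV W E z = 0 := by rw [hsplit z, hS1zz, hS2z, add_zero]
  refine ⟨hTVz, ?_⟩
  intro e he hWe
  have heterm := (Finset.sum_eq_zero_iff_of_nonneg
    (fun e _ => mul_nonneg (hW e.1 e.2) (norm_nonneg _))).1 hTVz e he
  have hn : ‖z e.1 - z e.2‖ = 0 := by
    rcases mul_eq_zero.1 heterm with h | h
    · exact absurd h (ne_of_gt hWe)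
    · exact h
  have := norm_sub_eq_zero_iff.1 hn
  rw [hzap, hzap] at this
  exact this
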